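/- Let a, b, c : ℤ → ℂ be 2-periodic sequences, write a_1 := a_m for odd m, a_2 := a_m for even m, and similarly b_1, b_2, c_1, c_2. Assume b_1c_1b_2c_2 ≠ 0, let s be a complex number with s² = b_1c_1b_2c_2, and set x = (a_1a_2 − b_1c_1 − b_2c_2)/(2s). Then for every integer p and every integer m ≥ 1, K_{2m}(p) = s^{m−1}·U_{m−1}(x)·(a_1a_2 − b_p c_p) − s^m·U_{m−2}(x) and K_{2m−1}(p+1) = s^{m−1}·U_{m−1}(x)·a_{p+1}. -/

import Mathlib

/-!
The transfer matrices `L(a_k, -b_k c_k)` generate the continuants: Laplace expansion along the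
first row gives the three-term recurrence `K_{n+1}(p) = a_p K_n(p+1) - b_p c_p K_{n-1}(p+2)`, so
the first column of `A_n(p)` is `(K_n(p), K_{n-1}(p+1))`. By 2-periodicity `A_{2m}(p) = M^m` with
`M = A_2(p)`, whose trace is `a₁a₂ - b₁c₁ - b₂c₂ = 2sx` and whose determinant is `b₁c₁b₂c₂ = s²`.
Cayley–Hamilton `M² = 2sx M - s²` and the Chebyshev recurrence then give
`M^m = s^{m-1} U_{m-1}(x) M - s^m U_{m-2}(x)`, and the first column of this is the claim.
-/

/-- The continuant `K_n(p)` of the sequences `a b c : ℤ → ℂ`: the determinant of the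
`n × n` tridiagonal matrix with diagonal `a_p, …, a_{p+n-1}`, superdiagonal
`b_p, …, b_{p+n-2}` and subdiagonal `c_p, …, c_{p+n-2}`; it equals `1` for `n = 0`
and `0` for `n < 0`. -/
noncomputable def contK (a b c : ℤ → ℂ) (p n : ℤ) : ℂ :=
  if n < 0 then 0 else
    Matrix.det (Matrix.of fun i j : Fin n.toNat =>
      if (i : ℕ) = (j : ℕ) then a (p + (i : ℕ))
      else if (i : ℕ) + 1 = (j : ℕ) then b (p + (i : ℕ))
      else if (i : ℕ) = (j : ℕ) + 1 then c (p + (j : ℕ))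
      else 0)

/-- The 2×2 matrix `L(α, β)` with first row `(α, β)` and second row `(1, 0)`. -/
def Lmat (α β : ℂ) : Matrix (Fin 2) (Fin 2) ℂ := !![α, β; 1, 0]

/-- `A_n(p) = L(a_p, −b_p c_p) ⋯ L(a_{p+n−1}, −b_{p+n−1} c_{p+n−1})`. -/
noncomputable def Amat (a b c : ℤ → ℂ) (p : ℤ) (n : ℕ) : Matrix (Fin 2) (Fin 2) ℂ :=
  ((List.range n).map (fun i => Lmat (a (p + (i : ℕ))) (-(b (p + (i : ℕ)) * c (p + (i : ℕ)))))).prod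

open Polynomial Matrix

theorem Function.Periodic.apply_emod {α : Type*} {f : ℤ → α} {c : ℤ}
    (hf : Function.Periodic f c) (p : ℤ) : f (p % c) = f p := by
  rw [Int.emod_def, mul_comm]
  exact hf.sub_int_mul_eq _

theorem Function.Periodic.two_cases {α : Type*} {f : ℤ → α}
    (hf : Function.Periodic f 2) (p : ℤ) :
    f p = f 0 ∧ f (p + 1) = f 1 ∨ f p = f 1 ∧ f (p + 1) = f 0 := by
  rw [← hf.apply_emod p, ← hf.apply_emod (p + 1)]
  rcases Int.emod_two_eq p with h | h
  · exact .inl ⟨by rw [h], by rw [show (p + 1) % 2 = 1 by omega]⟩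
  · exact .inr ⟨by rw [h], by rw [show (p + 1) % 2 = 0 by omega]⟩

theorem Function.Periodic.apply_mul_apply_add_one {M : Type*} [CommMagma M] {f : ℤ → M}
    (hf : Function.Periodic f 2) (p : ℤ) : f p * f (p + 1) = f 1 * f 0 := by
  rcases hf.two_cases p with ⟨h0, h1⟩ | ⟨h0, h1⟩ <;> rw [h0, h1]
  exact mul_comm _ _

theorem Function.Periodic.apply_add_apply_add_one {M : Type*} [AddCommMagma M] {f : ℤ → M}
    (hf : Function.Periodic f 2) (p : ℤ) : f p + f (p + 1) = f 1 + f 0 := by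
  rcases hf.two_cases p with ⟨h0, h1⟩ | ⟨h0, h1⟩ <;> rw [h0, h1]
  exact add_comm _ _

theorem Matrix.sq_fin_two {R : Type*} [CommRing R] (M : Matrix (Fin 2) (Fin 2) R) :
    M ^ 2 = M.trace • M - M.det • 1 := by
  ext i j
  fin_cases i <;> fin_cases j <;>
    simp [sq, Matrix.mul_apply, trace_fin_two, det_fin_two] <;> ring

theorem pow_succ_eq_chebyshevU {R A : Type*} [CommRing R] [Ring A] [Algebra R A]
    {M : A} {s x : R} (hM : M ^ 2 = (2 * s * x) • M - s ^ 2 • 1) (n : ℕ) :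
    M ^ (n + 1) = (s ^ n * (Chebyshev.U R n).eval x) • M
      - (s ^ (n + 1) * (Chebyshev.U R ((n : ℤ) - 1)).eval x) • 1 := by
  induction n with
  | zero => simp
  | succ n ih =>
    have hU : (Chebyshev.U R ((n + 1 : ℕ) : ℤ)).eval x
        = 2 * x * (Chebyshev.U R n).eval x - (Chebyshev.U R ((n : ℤ) - 1)).eval x := by
      simp [Chebyshev.U_add_one]
    rw [pow_succ, ih, sub_mul, smul_mul_assoc, smul_mul_assoc, ← sq, hM, one_mul, hU]
    push_cast
    rw [add_sub_cancel_right]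
    module

theorem trace_Lmat_mul_Lmat (α β γ δ : ℂ) :
    (Lmat α β * Lmat γ δ).trace = α * γ + β + δ := by
  simp [Lmat, trace_fin_two]

theorem det_Lmat (α β : ℂ) : (Lmat α β).det = -β := by
  simp [Lmat, det_fin_two]

section Amat

variable (a b c : ℤ → ℂ)

theorem Amat_zero (p : ℤ) : Amat a b c p 0 = 1 := rfl

theorem Amat_succ (p : ℤ) (n : ℕ) :
    Amat a b c p (n + 1) = Lmat (a p) (-(b p * c p)) * Amat a b c (p + 1) n := by
  simp only [Amat, List.range_succ_eq_map, List.map_cons, List.prod_cons, List.map_map,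
    Function.comp_def, Nat.cast_zero, add_zero, Nat.cast_succ, ← add_assoc, add_right_comm p 1]

theorem Amat_add (p : ℤ) (m n : ℕ) :
    Amat a b c p (m + n) = Amat a b c p m * Amat a b c (p + m) n := by
  induction m generalizing p with
  | zero => simp [Amat_zero]
  | succ m ih =>
    rw [add_right_comm, Amat_succ, ih, Amat_succ, mul_assoc]
    push_cast
    rw [add_assoc, add_comm (1 : ℤ)]

theorem Amat_two (p : ℤ) :
    Amat a b c p 2 =
      Lmat (a p) (-(b p * c p)) * Lmat (a (p + 1)) (-(b (p + 1) * c (p + 1))) := by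
  rw [Amat_succ, Amat_succ, Amat_zero, mul_one]

variable {a b c}

theorem Amat_add_two (ha : Function.Periodic a 2) (hb : Function.Periodic b 2)
    (hc : Function.Periodic c 2) (p : ℤ) (n : ℕ) : Amat a b c (p + 2) n = Amat a b c p n := by
  simp only [Amat, add_right_comm p 2, ha _, hb _, hc _]

theorem Amat_two_mul (ha : Function.Periodic a 2) (hb : Function.Periodic b 2)
    (hc : Function.Periodic c 2) (p : ℤ) (m : ℕ) :
    Amat a b c p (2 * m) = Amat a b c p 2 ^ m := by
  induction m with
  | zero => rfl
  | succ m ih =>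
    rw [mul_add_one, add_comm, Amat_add, Nat.cast_ofNat, Amat_add_two ha hb hc, ih, pow_succ']

end Amat

noncomputable def contMatrix (a b c : ℤ → ℂ) (p : ℤ) (n : ℕ) :
    Matrix (Fin n) (Fin n) ℂ :=
  of fun i j : Fin n =>
    if (i : ℕ) = (j : ℕ) then a (p + (i : ℕ))
    else if (i : ℕ) + 1 = (j : ℕ) then b (p + (i : ℕ))
    else if (i : ℕ) = (j : ℕ) + 1 then c (p + (j : ℕ))
    else 0

section contK

variable (a b c : ℤ → ℂ)

theorem contMatrix_submatrix_succ (p : ℤ) (n : ℕ) :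
    (contMatrix a b c p (n + 1)).submatrix Fin.succ Fin.succ = contMatrix a b c (p + 1) n := by
  ext i j
  simp [contMatrix, add_assoc, add_comm (1 : ℤ)]

theorem contMatrix_det_add_two (p : ℤ) (n : ℕ) :
    (contMatrix a b c p (n + 2)).det =
      a p * (contMatrix a b c (p + 1) (n + 1)).det
        - b p * c p * (contMatrix a b c (p + 2) n).det := by
  set M := contMatrix a b c p (n + 2)
  have hM00 : M 0 0 = a p := by simp [M, contMatrix]
  have hM01 : M 0 1 = b p := by simp [M, contMatrix]
  have hM10 : M 1 0 = c p := by simp [M, contMatrix]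
  have hrow : ∀ j : Fin n, M 0 j.succ.succ = 0 := by simp [M, contMatrix]
  have hcol : ∀ i : Fin n, M i.succ.succ 0 = 0 := by simp [M, contMatrix]
  have hminor : (M.submatrix Fin.succ (Fin.succAbove 1)).det =
      c p * (contMatrix a b c (p + 2) n).det := by
    have hsub : (M.submatrix Fin.succ (Fin.succAbove 1)).submatrix (Fin.succAbove 0) Fin.succ =
        (M.submatrix Fin.succ Fin.succ).submatrix Fin.succ Fin.succ := by
      ext i j
      simp
    have htwo : contMatrix a b c (p + 1 + 1) n = contMatrix a b c (p + 2) n := by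
      rw [add_assoc, one_add_one_eq_two]
    rw [det_succ_column_zero, Fin.sum_univ_succ, hsub, contMatrix_submatrix_succ,
      contMatrix_submatrix_succ, htwo]
    simp [hM10, hcol]
  rw [det_succ_row_zero, Fin.sum_univ_succ, Fin.sum_univ_succ, Fin.succ_zero_eq_one, hminor,
    Fin.succAbove_zero, contMatrix_submatrix_succ]
  simp only [Fin.val_zero, Fin.val_one, pow_zero, pow_one, hM00, hM01, hrow, mul_zero, zero_mul,
    Finset.sum_const_zero, add_zero]
  ring

theorem contK_natCast (p : ℤ) (n : ℕ) : contK a b c p n = (contMatrix a b c p n).det := by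
  rw [contK, if_neg (by omega)]
  rfl

theorem contK_neg_one (p : ℤ) : contK a b c p (-1) = 0 := by
  simp [contK]

theorem contK_zero (p : ℤ) : contK a b c p 0 = 1 := by
  simp [contK]

theorem contK_one (p : ℤ) : contK a b c p 1 = a p := by
  simp [contK, det_unique]

theorem contK_succ (p : ℤ) (n : ℕ) :
    contK a b c p (n + 1) =
      a p * contK a b c (p + 1) n - b p * c p * contK a b c (p + 2) (n - 1) := by
  cases n with
  | zero => simp [contK_neg_one, contK_zero, contK_one]
  | succ n =>
    have h := contMatrix_det_add_two a b c p n
    simp only [← contK_natCast] at h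
    push_cast at h ⊢
    rw [add_sub_cancel_right, add_assoc, one_add_one_eq_two, h]

theorem contK_two (p : ℤ) : contK a b c p 2 = a p * a (p + 1) - b p * c p := by
  simpa [contK_one, contK_zero] using contK_succ a b c p 1

theorem Amat_mulVec_eq_contK (p : ℤ) (n : ℕ) :
    Amat a b c p n *ᵥ ![1, 0] = ![contK a b c p n, contK a b c (p + 1) (n - 1)] := by
  induction n generalizing p with
  | zero => simp [Amat_zero, contK_neg_one, contK_zero]
  | succ n ih =>
    push_cast
    rw [Amat_succ, ← mulVec_mulVec, ih, contK_succ, add_assoc, one_add_one_eq_two,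
      add_sub_cancel_right]
    ext i
    fin_cases i <;> simp [Lmat, mulVec, dotProduct, Fin.sum_univ_two, sub_eq_add_neg]

end contK

/-- Periodic continuants of period 2: writing `a₁ = a` at odd indices, `a₂ = a` at even
indices (and similarly for `b, c`), if `b₁c₁b₂c₂ ≠ 0`, `s² = b₁c₁b₂c₂` and
`x = (a₁a₂ − b₁c₁ − b₂c₂)/(2s)`, then
`K_{2m}(p) = s^{m−1}·U_{m−1}(x)·(a₁a₂ − b_p c_p) − s^m·U_{m−2}(x)` and
`K_{2m−1}(p+1) = s^{m−1}·U_{m−1}(x)·a_{p+1}`. -/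
theorem contK_period_two (a b c : ℤ → ℂ)
    (ha : ∀ k : ℤ, a (k + 2) = a k) (hb : ∀ k : ℤ, b (k + 2) = b k)
    (hc : ∀ k : ℤ, c (k + 2) = c k)
    (hbc : b 1 * c 1 * (b 0 * c 0) ≠ 0) (s : ℂ) (hs : s ^ 2 = b 1 * c 1 * (b 0 * c 0))
    (x : ℂ) (hx : x = (a 1 * a 0 - b 1 * c 1 - b 0 * c 0) / (2 * s))
    (p : ℤ) (m : ℕ) (hm : 1 ≤ m) :
    contK a b c p (2 * (m : ℤ)) =
        s ^ (m - 1) * (Polynomial.Chebyshev.U ℂ ((m : ℤ) - 1)).eval x * (a 1 * a 0 - b p * c p)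
          - s ^ m * (Polynomial.Chebyshev.U ℂ ((m : ℤ) - 2)).eval x ∧
    contK a b c (p + 1) (2 * (m : ℤ) - 1) =
        s ^ (m - 1) * (Polynomial.Chebyshev.U ℂ ((m : ℤ) - 1)).eval x * a (p + 1) := by
  obtain ⟨k, rfl⟩ := Nat.exists_eq_add_of_le' hm
  have hs0 : s ≠ 0 := by
    rintro rfl
    exact hbc (by simpa using hs.symm)
  have haa : a p * a (p + 1) = a 1 * a 0 := Function.Periodic.apply_mul_apply_add_one ha p
  have hbc_periodic : Function.Periodic (fun k => b k * c k) 2 := fun k => by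
    simp only [hb k, hc k]
  have htrace : (Amat a b c p 2).trace = 2 * s * x := by
    rw [Amat_two, trace_Lmat_mul_Lmat, hx, mul_div_cancel₀ _ (mul_ne_zero two_ne_zero hs0)]
    linear_combination haa - hbc_periodic.apply_add_apply_add_one p
  have hdet : (Amat a b c p 2).det = s ^ 2 := by
    rw [Amat_two, det_mul, det_Lmat, det_Lmat, hs]
    linear_combination hbc_periodic.apply_mul_apply_add_one p
  have hpow := pow_succ_eq_chebyshevU (M := Amat a b c p 2) (by rw [sq_fin_two, htrace, hdet]) k
  have hcol := Amat_mulVec_eq_contK a b c p (2 * (k + 1))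
  rw [Amat_two_mul ha hb hc, hpow, sub_mulVec, smul_mulVec, smul_mulVec, one_mulVec,
    Amat_mulVec_eq_contK] at hcol
  simp only [Nat.cast_ofNat, Int.reduceSub, contK_two, contK_one, smul_cons, smul_eq_mul,
    smul_empty, mul_one, mul_zero, sub_cons, head_cons, tail_cons, sub_zero, sub_self, zero_empty,
    vecCons_inj, and_true] at hcol
  push_cast at hcol ⊢
  rw [add_sub_cancel_right, show (k : ℤ) + 1 - 2 = k - 1 by ring, ← hcol.1, ← hcol.2]
  refine ⟨?_, rfl⟩
  linear_combination (s ^ k * (Chebyshev.U ℂ k).eval x) * haa
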